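/- arXiv:1512.01351 — 2 statements merged into one kernel-verified Lean document; each statement's English description precedes it below -/
import Mathlib

section
/- Let K be a field of characteristic 0 and let f ∈ K[x₀,x₁,x₂,x₃]. Suppose that for every matrix (a b; c d) ∈ SL₂(K), the substitution x₀ ↦ a x₀ + c x₁, x₁ ↦ b x₀ + d x₁, x₂ ↦ a x₂ + c x₃, x₃ ↦ b x₂ + d x₃ fixes f. Then f lies in the K-subalgebra generated by x₀x₃ − x₁x₂, i.e., f = p(x₀x₃ − x₁x₂) for some univariate polynomial p over K. (That is, K[X₄]^{SL₂(K)} = K[x₀x₃ − x₁x₂] when KX₄ ≅ V₁ ⊕ V₁.) -/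
/-!
Every point `y` with `e = y₀y₃ - y₁y₂ ≠ 0` is moved to `(1, 0, 0, e)` by an element of `SL₂(K)`,
so an invariant `f` agrees with `p(x₀x₃ - x₁x₂)`, where `p(t) = f(1, 0, 0, t)`, off the hypersurface
`x₀x₃ - x₁x₂ = 0`. Multiplying by `x₀x₃ - x₁x₂` turns this into an identity of polynomial functions
on all of `K⁴`, hence of polynomials since `K` is infinite, and the factor can be cancelled.
-/

open MvPolynomial

theorem MvPolynomial.eq_of_eval_eq_of_eval_ne_zero {σ R : Type*} [CommRing R] [IsDomain R]
    [Infinite R] {f g D : MvPolynomial σ R} (hD : D ≠ 0)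
    (h : ∀ y, eval y D ≠ 0 → eval y f = eval y g) : f = g := by
  refine mul_right_cancel₀ hD (MvPolynomial.funext fun y => ?_)
  by_cases hy : eval y D = 0
  · simp [hy]
  · simp [h y hy]

theorem MvPolynomial.eval_aeval {σ τ R : Type*} [CommSemiring R] (g : σ → MvPolynomial τ R)
    (y : τ → R) (f : MvPolynomial σ R) :
    eval y (aeval g f) = eval (fun i => eval y (g i)) f :=
  comp_aeval_apply (f := g) (aeval y) f

theorem MvPolynomial.eval_polynomial_aeval {σ R : Type*} [CommSemiring R] (y : σ → R)
    (D : MvPolynomial σ R) (p : Polynomial R) :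
    eval y (Polynomial.aeval D p) = p.eval (eval y D) := by
  rw [← Polynomial.coe_aeval_eq_eval]
  exact (Polynomial.aeval_algHom_apply (aeval y) D p).symm

section SL2

variable {K : Type*} [Field K]

/-- The substitution `σ_g` for `g = (a b; c d)`. -/
noncomputable def diagSubst (a b c d : K) : Fin 4 → MvPolynomial (Fin 4) K :=
  ![C a * X 0 + C c * X 1, C b * X 0 + C d * X 1, C a * X 2 + C c * X 3, C b * X 2 + C d * X 3]

theorem eval_aeval_diagSubst (a b c d : K) (y : Fin 4 → K) (f : MvPolynomial (Fin 4) K) :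
    eval y (aeval (diagSubst a b c d) f) =
      eval ![a * y 0 + c * y 1, b * y 0 + d * y 1, a * y 2 + c * y 3, b * y 2 + d * y 3] f := by
  rw [eval_aeval]
  congr 2
  funext i
  fin_cases i <;> simp [diagSubst]

theorem eval_eq_eval_of_det_ne_zero {f : MvPolynomial (Fin 4) K}
    (hf : ∀ a b c d : K, a * d - b * c = 1 → aeval (diagSubst a b c d) f = f)
    {y : Fin 4 → K} (hy : y 0 * y 3 - y 1 * y 2 ≠ 0) :
    eval y f = eval ![1, 0, 0, y 0 * y 3 - y 1 * y 2] f := by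
  set e := y 0 * y 3 - y 1 * y 2
  -- `g = (y₃/e, -y₁; -y₂/e, y₀)` carries `y` to `(1, 0, 0, e)`.
  have hdet : y 3 / e * y 0 - -y 1 * (-y 2 / e) = 1 := by
    field_simp
    ring
  have moved := eval_aeval_diagSubst (y 3 / e) (-y 1) (-y 2 / e) (y 0) y f
  rw [hf _ _ _ _ hdet] at moved
  rw [moved]
  congr 2
  funext i
  fin_cases i <;> simp <;> field_simp <;> ring

end SL2

/-- `K[X₄]^{SL₂(K)} = K[x₀x₃ − x₁x₂]` when `KX₄ ≅ V₁ ⊕ V₁`: a polynomial fixed by every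
`SL₂(K)`-substitution acting diagonally on the two pairs `{x₀,x₁}` and `{x₂,x₃}` of
binary linear forms is a polynomial in `x₀x₃ − x₁x₂`. -/
theorem stmt_12 {K : Type*} [Field K] [CharZero K] (f : MvPolynomial (Fin 4) K)
    (hf : ∀ a b c d : K, a * d - b * c = 1 →
      aeval ![C a * X 0 + C c * X 1, C b * X 0 + C d * X 1,
              C a * X 2 + C c * X 3, C b * X 2 + C d * X 3] f = f) :
    ∃ p : Polynomial K,
      f = Polynomial.aeval (X 0 * X 3 - X 1 * X 2 : MvPolynomial (Fin 4) K) p := by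
  have hD : (X 0 * X 3 - X 1 * X 2 : MvPolynomial (Fin 4) K) ≠ 0 := fun h => by
    simpa using congrArg (eval ![1, 0, 0, 1]) h
  refine ⟨aeval ![1, 0, 0, Polynomial.X] f, eq_of_eval_eq_of_eval_ne_zero hD fun y hy => ?_⟩
  simp only [map_sub, map_mul, eval_X] at hy
  rw [eval_polynomial_aeval, eval_eq_eval_of_det_ne_zero hf hy, ← Polynomial.coe_aeval_eq_eval,
    comp_aeval_apply]
  congr 2
  funext i
  fin_cases i <;> simp
end

section
/- Let K be a field of characteristic 0 and let c = (c₀, c₁, c₂) be a triple of polynomials in K[x₀,x₁,x₂] such that x₀c₀ + x₁c₁ + x₂c₂ = 0 and such that for every (a b; c d) ∈ SL₂(K), writing σ for the substitution x₀ ↦ a²x₀ + 2ac x₁ + c²x₂, x₁ ↦ ab x₀ + (ad+bc)x₁ + cd x₂, x₂ ↦ b²x₀ + 2bd x₁ + d²x₂ and M for the matrix with columns (a², 2ac, c²), (ab, ad+bc, cd), (b², 2bd, d²), one has Σ_{i=0}^2 M_{j i} σ(c_i) = c_j for all j. Then c = (0,0,0). (That is, when KX₃ ≅ V₂, the commutator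 ideal of the free metabelian Lie algebra F₃ contains no nonzero SL₂(K)-invariants: (F₃′)^{SL₂(K)} = 0, and hence F₃^{SL₂(K)} = 0.) -/
/-!
Only the Weyl element and upper triangular elements are needed. Write `Δ = x₀x₂ - x₁²` and
`f = v₂(1, 0, Δ)`. The upper triangular element `(t, x₁/t; 0, t⁻¹)` moves `(1, 0, t²x₂ - x₁²)`
to `(t², x₁, x₂)`, so `v₂ = x₀ f` at every point whose first coordinate is a nonzero square; in
characteristic `0` these points are Zariski dense, so `v₂ = x₀ f`. The Weyl element gives
`v₀ = v₂(x₂, -x₁, x₀)`, which is `x₂ f` because `Δ` is Weyl invariant. The relation then reads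
`x₁ v₁ = -2 x₀ x₂ f`; setting `x₁ = 0, x₂ = 1` gives `x₀ v₂(1, 0, x₀) = 0`, hence `f = 0`, and
then `v = 0`.
-/

open MvPolynomial

theorem Set.infinite_setOf_eq_sq_of_ne_zero (R : Type*) [Semiring R] [CharZero R] :
    {y : R | ∃ t ≠ 0, y = t ^ 2}.Infinite := by
  refine Set.infinite_of_injective_forall_mem (f := fun n : ℕ => ((n : R) + 1) ^ 2) ?_
    fun n => ⟨_, Nat.cast_add_one_ne_zero n, rfl⟩
  intro m n h
  have hsq : (m + 1) ^ 2 = (n + 1) ^ 2 := by dsimp only at h; exact_mod_cast h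
  have := Nat.pow_left_injective two_ne_zero hsq
  omega

namespace MvPolynomial

theorem eval_aeval_s13 {R σ τ : Type*} [CommSemiring R] (x : τ → R) (g : σ → MvPolynomial τ R)
    (p : MvPolynomial σ R) : eval x (aeval g p) = eval (fun i => eval x (g i)) p := by
  rw [aeval_eq_bind₁]
  exact eval₂Hom_bind₁ _ _ _ _

theorem eq_zero_of_eval_eq_zero_of_eq_sq {R σ : Type*} [CommRing R] [IsDomain R] [CharZero R]
    (i : σ) {p : MvPolynomial σ R} (h : ∀ x : σ → R, ∀ t ≠ 0, x i = t ^ 2 → eval x p = 0) :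
    p = 0 := by
  classical
  refine funext_set (fun j => if j = i then {y | ∃ t ≠ 0, y = t ^ 2} else Set.univ)
    (fun j => ?_) fun x hx => ?_
  · split_ifs
    exacts [Set.infinite_setOf_eq_sq_of_ne_zero R, Set.infinite_univ]
  · obtain ⟨t, ht, hxt⟩ : ∃ t ≠ 0, x i = t ^ 2 := by simpa using hx i trivial
    rw [h x t ht hxt, map_zero]

end MvPolynomial

section CommRing

variable {R : Type*} [CommRing R]

/-- The determinant of the binary quadratic form `x₀ X² + 2 x₁ X Y + x₂ Y²`. -/
noncomputable def quadFormDet (R : Type*) [CommRing R] : MvPolynomial (Fin 3) R :=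
  X 0 * X 2 - X 1 ^ 2

theorem aeval_weyl_aeval_quadFormDet (p : MvPolynomial (Fin 3) R) :
    aeval ![X 2, -X 1, X 0] (aeval ![1, 0, quadFormDet R] p) = aeval ![1, 0, quadFormDet R] p := by
  rw [aeval_eq_bind₁, aeval_eq_bind₁, bind₁_bind₁]
  congr 2
  funext i
  fin_cases i <;> simp [quadFormDet]
  ring

theorem aeval_quadFormDet_eq_zero_of_X_one_dvd [IsDomain R] {p : MvPolynomial (Fin 3) R}
    (h : X 1 ∣ X 0 * X 2 * aeval ![1, 0, quadFormDet R] p) :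
    aeval ![1, 0, quadFormDet R] p = 0 := by
  have hrestrict : aeval ![X 0, 0, 1] (aeval ![1, 0, quadFormDet R] p)
      = aeval ![1, 0, (X 0 : MvPolynomial (Fin 3) R)] p := by
    rw [aeval_eq_bind₁, aeval_eq_bind₁, aeval_eq_bind₁, bind₁_bind₁]
    congr 2
    funext i
    fin_cases i <;> simp [quadFormDet]
  have hextend : aeval ![quadFormDet R, X 1, X 2] (aeval ![1, 0, (X 0 : MvPolynomial (Fin 3) R)] p)
      = aeval ![1, 0, quadFormDet R] p := by
    rw [aeval_eq_bind₁, aeval_eq_bind₁, aeval_eq_bind₁, bind₁_bind₁]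
    congr 2
    funext i
    fin_cases i <;> simp
  obtain ⟨q, hq⟩ := h
  have hzero := congrArg (aeval ![X 0, 0, (1 : MvPolynomial (Fin 3) R)]) hq
  simp [hrestrict, X_ne_zero, -aeval_eq_bind₁] at hzero
  rw [← hextend, hzero, map_zero]

def sl2QuadFormMatrix (a b c d : R) : Fin 3 → Fin 3 → R :=
  ![![a ^ 2, a * b, b ^ 2],
    ![2 * a * c, a * d + b * c, 2 * b * d],
    ![c ^ 2, c * d, d ^ 2]]

noncomputable def sl2QuadFormSubst (a b c d : R) : Fin 3 → MvPolynomial (Fin 3) R :=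
  ![C (a ^ 2) * X 0 + C (2 * a * c) * X 1 + C (c ^ 2) * X 2,
    C (a * b) * X 0 + C (a * d + b * c) * X 1 + C (c * d) * X 2,
    C (b ^ 2) * X 0 + C (2 * b * d) * X 1 + C (d ^ 2) * X 2]

def IsSL2Invariant (v : Fin 3 → MvPolynomial (Fin 3) R) : Prop :=
  ∀ a b c d : R, a * d - b * c = 1 → ∀ j,
    ∑ i, C (sl2QuadFormMatrix a b c d j i) * aeval (sl2QuadFormSubst a b c d) (v i) = v j

variable {v : Fin 3 → MvPolynomial (Fin 3) R}

theorem IsSL2Invariant.eval_eq (hv : IsSL2Invariant v) {a b c d : R} (h : a * d - b * c = 1)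
    (j : Fin 3) (y : Fin 3 → R) :
    ∑ i, sl2QuadFormMatrix a b c d j i * eval (fun k => eval y (sl2QuadFormSubst a b c d k)) (v i)
      = eval y (v j) := by
  rw [← hv a b c d h j, map_sum]
  simp only [map_mul, eval_C, eval_aeval_s13]

theorem IsSL2Invariant.zero_eq (hv : IsSL2Invariant v) :
    v 0 = aeval ![X 2, -X 1, X 0] (v 2) := by
  simpa [Fin.sum_univ_three, sl2QuadFormMatrix, sl2QuadFormSubst] using
    (hv 0 1 (-1) 0 (by ring) 0).symm

end CommRing

section Field

variable {K : Type*} [Field K] {v : Fin 3 → MvPolynomial (Fin 3) K}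

theorem IsSL2Invariant.eval_two_sq (hv : IsSL2Invariant v) {t : K} (ht : t ≠ 0) (x₁ x₂ : K) :
    eval ![t ^ 2, x₁, x₂] (v 2) = t ^ 2 * eval ![1, 0, t ^ 2 * x₂ - x₁ ^ 2] (v 2) := by
  have hσ : (fun i => eval ![1, 0, t ^ 2 * x₂ - x₁ ^ 2] (sl2QuadFormSubst t (x₁ / t) 0 t⁻¹ i))
      = ![t ^ 2, x₁, x₂] := by
    funext i
    fin_cases i <;> simp [sl2QuadFormSubst]
    · field_simp
    · field_simp; ring
  have h := hv.eval_eq (a := t) (b := x₁ / t) (c := 0) (d := t⁻¹) (by field_simp; ring) 2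
    ![1, 0, t ^ 2 * x₂ - x₁ ^ 2]
  rw [hσ, Fin.sum_univ_three] at h
  simp [sl2QuadFormMatrix] at h
  rw [← h]
  field_simp

theorem IsSL2Invariant.two_eq [CharZero K] (hv : IsSL2Invariant v) :
    v 2 = X 0 * aeval ![1, 0, quadFormDet K] (v 2) := by
  rw [← sub_eq_zero]
  refine eq_zero_of_eval_eq_zero_of_eq_sq 0 fun x t ht hx => ?_
  have hx' : x = ![t ^ 2, x 1, x 2] := by ext i; fin_cases i <;> simp [hx]
  have hdet : (fun i => eval x (![1, 0, quadFormDet K] i)) = ![1, 0, t ^ 2 * x 2 - x 1 ^ 2] := by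
    funext i; fin_cases i <;> simp [quadFormDet, hx]
  rw [map_sub, map_mul, eval_X, eval_aeval_s13, hdet, hx, sub_eq_zero]
  nth_rw 1 [hx']
  exact hv.eval_two_sq ht _ _

end Field

/-- When `KX₃ ≅ V₂`, the commutator ideal of the free metabelian Lie algebra `F₃`
contains no nonzero `SL₂(K)`-invariants: a tuple `v = (v₀,v₁,v₂)` of polynomials with
`Σ_i x_i v_i = 0` (Shmel'kin's identification of `F₃′`) that is fixed by the action of
every element of `SL₂(K)` must be zero. Hence `F₃^{SL₂(K)} = 0`. -/
theorem stmt_13 {K : Type*} [Field K] [CharZero K]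
    (v : Fin 3 → MvPolynomial (Fin 3) K)
    (hrel : ∑ i, X i * v i = 0)
    (hinv : ∀ a b c d : K, a * d - b * c = 1 →
      ∀ j, ∑ i, C ((![![a ^ 2, a * b, b ^ 2],
                      ![2 * a * c, a * d + b * c, 2 * b * d],
                      ![c ^ 2, c * d, d ^ 2]] : Fin 3 → Fin 3 → K) j i) *
        aeval ![C (a ^ 2) * X 0 + C (2 * a * c) * X 1 + C (c ^ 2) * X 2,
                C (a * b) * X 0 + C (a * d + b * c) * X 1 + C (c * d) * X 2,
                C (b ^ 2) * X 0 + C (2 * b * d) * X 1 + C (d ^ 2) * X 2] (v i) = v j) :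
    v = 0 := by
  have hv : IsSL2Invariant v := hinv
  set f := aeval ![1, 0, quadFormDet K] (v 2)
  have h2 : v 2 = X 0 * f := hv.two_eq
  have h0 : v 0 = X 2 * f := by
    rw [hv.zero_eq, h2, map_mul, aeval_X, aeval_weyl_aeval_quadFormDet]
    rfl
  have hf : f = 0 := by
    have htwo : IsUnit (2 : MvPolynomial (Fin 3) K) := by
      rw [← map_ofNat C 2]
      exact (IsUnit.mk0 (2 : K) two_ne_zero).map C
    refine aeval_quadFormDet_eq_zero_of_X_one_dvd (htwo.dvd_mul_left.1 ⟨-v 1, ?_⟩)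
    rw [Fin.sum_univ_three, h0, h2] at hrel
    linear_combination hrel
  rw [Fin.sum_univ_three, h0, h2, hf] at hrel
  funext i
  fin_cases i
  · simp [h0, hf]
  · simpa [X_ne_zero] using hrel
  · simp [h2, hf]
end
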